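/- Let F : ℝ → ℝ be continuous with |F(s)| ~ |s|^κ as s → 0 for some κ > 2, and |F(s)| e^{-α s²} → 0 as |s| → ∞ for every α > 0. Then for any radially symmetric u ∈ H¹(ℝ²) and any 0 ≤ b ≤ κ/2 - 1, the function x ↦ |x|^b F(u(x)) belongs to L¹(ℝ²). -/

import Mathlib

/-!
Strauss' radial lemma: if `u x = g ‖x‖` on `ℝⁿ`, then `g r ^ 2 = -∫_r^∞ (g ^ 2)'` and
`|(g ^ 2)'| ≤ g ^ 2 + g' ^ 2`, so `r ^ (n - 1) * g r ^ 2 ≤ ∫_0^∞ s ^ (n - 1) (g ^ 2 + g' ^ 2)`,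
which is a multiple of `‖u‖₂² + ‖∇u‖₂²`. In the plane this gives `‖x‖ * u x ^ 2 ≤ C`, hence
`u → 0` at infinity, where `|F (u x)| ≤ 2 |u x| ^ κ`, and
`‖x‖ ^ b |u| ^ κ = (‖x‖ u²) ^ b |u| ^ (κ - 2b - 2) u² ≤ C ^ b u²` because `κ - 2b - 2 ≥ 0`.
So the continuous integrand is `O(u²)` at infinity, hence integrable.
-/

open MeasureTheory Filter Set Topology

theorem norm_fderiv_eq_of_radial {E G : Type*} [NormedAddCommGroup E] [InnerProductSpace ℝ E]
    [NormedAddCommGroup G] [NormedSpace ℝ G] {u : E → G}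
    (hrad : ∀ x y, ‖x‖ = ‖y‖ → u x = u y) {x y : E} (hxy : ‖x‖ = ‖y‖) :
    ‖fderiv ℝ u x‖ = ‖fderiv ℝ u y‖ := by
  set A := Submodule.reflection (ℝ ∙ (x - y))ᗮ
  have hAu : u ∘ A = u := funext fun z => hrad _ _ (A.norm_map z)
  have := A.toContinuousLinearEquiv.comp_right_fderiv (f := u) (x := x)
  simp only [LinearIsometryEquiv.coe_toContinuousLinearEquiv, hAu] at this
  rw [this, Submodule.reflection_sub hxy]
  exact ContinuousLinearMap.opNorm_comp_linearIsometryEquiv _ A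

theorem abs_le_integral_abs_of_hasDerivAt_of_integrableOn_Ioi {f f' : ℝ → ℝ} {a : ℝ}
    (hderiv : ∀ x ∈ Ici a, HasDerivAt f (f' x) x) (f'int : IntegrableOn f' (Ioi a))
    (fint : IntegrableOn f (Ioi a)) :
    |f a| ≤ ∫ x in Ioi a, |f' x| := by
  have hf : Tendsto f atTop (𝓝 0) :=
    tendsto_zero_of_hasDerivAt_of_integrableOn_Ioi (fun x hx => hderiv x hx.out.le) f'int fint
  have h := integral_Ioi_of_hasDerivAt_of_tendsto' hderiv f'int hf
  rw [zero_sub] at h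
  calc |f a| = |∫ x in Ioi a, f' x| := by rw [h, abs_neg]
    _ ≤ ∫ x in Ioi a, |f' x| := abs_integral_le_integral_abs

theorem pow_mul_sq_le_integral_Ioi {g : ℝ → ℝ} (hg : Differentiable ℝ g) (k : ℕ)
    (hint : IntegrableOn (fun r => r ^ k * (g r ^ 2 + deriv g r ^ 2)) (Ioi 0))
    {r₀ : ℝ} (hr₀ : 0 < r₀) :
    r₀ ^ k * g r₀ ^ 2 ≤ ∫ r in Ioi 0, r ^ k * (g r ^ 2 + deriv g r ^ 2) := by
  set φ : ℝ → ℝ := fun r => g r ^ 2 + deriv g r ^ 2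
  have hφm : Measurable φ :=
    (hg.continuous.measurable.pow_const 2).add ((measurable_deriv g).pow_const 2)
  have hr₀k : 0 < r₀ ^ k := pow_pos hr₀ k
  have hweight : ∀ r ∈ Ioi r₀, r₀ ^ k * φ r ≤ r ^ k * φ r := fun r hr =>
    mul_le_mul_of_nonneg_right (pow_le_pow_left₀ hr₀.le (le_of_lt hr) k) (by positivity)
  have hint₀ : IntegrableOn (fun r => r ^ k * φ r) (Ioi r₀) :=
    hint.mono_set (Ioi_subset_Ioi hr₀.le)
  have hφint : IntegrableOn φ (Ioi r₀) := by
    refine (hint₀.const_mul (r₀ ^ k)⁻¹).mono' hφm.aestronglyMeasurable ?_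
    refine (ae_restrict_iff' measurableSet_Ioi).2 (.of_forall fun r hr => ?_)
    rw [Real.norm_of_nonneg (by positivity), ← div_eq_inv_mul, le_div_iff₀ hr₀k, mul_comm]
    exact hweight r hr
  have hderiv : ∀ r ∈ Ici r₀, HasDerivAt (fun r => g r ^ 2) (2 * g r * deriv g r) r := by
    intro r _
    simpa [mul_assoc] using (hg r).hasDerivAt.fun_pow 2
  have hbound : ∀ r, |2 * g r * deriv g r| ≤ φ r := fun r => by
    simpa [φ, abs_mul, sq_abs] using two_mul_le_add_sq |g r| |deriv g r|
  have hD : IntegrableOn (fun r => 2 * g r * deriv g r) (Ioi r₀) :=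
    hφint.mono'
      ((hg.continuous.measurable.const_mul 2).mul (measurable_deriv g)).aestronglyMeasurable
      (.of_forall fun r => (Real.norm_eq_abs _).trans_le (hbound r))
  have hG : IntegrableOn (fun r => g r ^ 2) (Ioi r₀) :=
    hφint.mono' (hg.continuous.pow 2).aestronglyMeasurable
      (.of_forall fun r => by
        simpa only [φ, norm_pow, Real.norm_eq_abs, sq_abs] using
          le_add_of_nonneg_right (sq_nonneg (deriv g r)))
  have hsq := abs_le_integral_abs_of_hasDerivAt_of_integrableOn_Ioi hderiv hD hG
  rw [abs_of_nonneg (sq_nonneg _)] at hsq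
  calc r₀ ^ k * g r₀ ^ 2 ≤ r₀ ^ k * ∫ r in Ioi r₀, φ r := by
        gcongr
        exact hsq.trans (setIntegral_mono_on hD.abs hφint measurableSet_Ioi fun r _ => hbound r)
    _ = ∫ r in Ioi r₀, r₀ ^ k * φ r := (integral_const_mul _ _).symm
    _ ≤ ∫ r in Ioi r₀, r ^ k * φ r :=
        setIntegral_mono_on (hφint.const_mul _) hint₀ measurableSet_Ioi hweight
    _ ≤ ∫ r in Ioi 0, r ^ k * φ r := by
        refine setIntegral_mono_set hint ?_ (Ioi_subset_Ioi hr₀.le).eventuallyLE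
        exact (ae_restrict_iff' measurableSet_Ioi).2 (.of_forall fun r hr =>
          mul_nonneg (pow_nonneg (le_of_lt hr) k) (by positivity))

theorem exists_norm_pow_mul_sq_le_of_radial {E : Type*} [NormedAddCommGroup E]
    [InnerProductSpace ℝ E] [FiniteDimensional ℝ E] [Nontrivial E] [MeasurableSpace E]
    [BorelSpace E] (μ : Measure E) [μ.IsAddHaarMeasure] {u : E → ℝ}
    (hrad : ∀ x y, ‖x‖ = ‖y‖ → u x = u y) (hdiff : Differentiable ℝ u) (hu : MemLp u 2 μ)
    (hgrad : MemLp (fun x => ‖fderiv ℝ u x‖) 2 μ) :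
    ∃ C, ∀ x, x ≠ 0 → ‖x‖ ^ (Module.finrank ℝ E - 1) * u x ^ 2 ≤ C := by
  obtain ⟨e, he⟩ := exists_norm_eq E zero_le_one
  set g : ℝ → ℝ := fun r => u (r • e)
  set n := Module.finrank ℝ E
  have hnorm : ∀ x : E, ‖‖x‖ • e‖ = ‖x‖ := fun x => by
    rw [norm_smul, he, mul_one, norm_norm]
  have hug : ∀ x, u x = g ‖x‖ := fun x => hrad _ _ (hnorm x).symm
  have hline : ∀ r, HasDerivAt (fun s : ℝ => s • e) e r := fun r => by
    simpa using (hasDerivAt_id r).smul_const e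
  have hg' : ∀ r, HasDerivAt g (fderiv ℝ u (r • e) e) r := fun r =>
    (hdiff _).hasFDerivAt.comp_hasDerivAt r (hline r)
  have hg : Differentiable ℝ g := fun r => (hg' r).differentiableAt
  have hderiv_le : ∀ r, |deriv g r| ≤ ‖fderiv ℝ u (r • e)‖ := fun r => by
    rw [(hg' r).deriv]
    simpa [he] using (fderiv ℝ u (r • e)).le_opNorm e
  set ψ : ℝ → ℝ := fun r => g r ^ 2 + ‖fderiv ℝ u (r • e)‖ ^ 2
  have hψ : Integrable (fun x => ψ ‖x‖) μ := by
    refine (hu.integrable_sq.add hgrad.integrable_sq).congr (.of_forall fun x => ?_)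
    simp only [Pi.add_apply, ψ, ← hug, norm_fderiv_eq_of_radial hrad (hnorm x)]
  rw [integrable_fun_norm_addHaar μ] at hψ
  have hint : IntegrableOn (fun r => r ^ (n - 1) * (g r ^ 2 + deriv g r ^ 2)) (Ioi 0) := by
    refine hψ.mono' ?_ ((ae_restrict_iff' measurableSet_Ioi).2 (.of_forall fun r hr => ?_))
    · exact ((measurable_id.pow_const _).mul ((hg.continuous.measurable.pow_const 2).add
        ((measurable_deriv g).pow_const 2))).aestronglyMeasurable
    · have hr : (0:ℝ) ≤ r := le_of_lt hr
      rw [Real.norm_of_nonneg (by positivity), smul_eq_mul]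
      simp only [ψ]
      gcongr r ^ (n - 1) * (g r ^ 2 + ?_)
      exact sq_le_sq.2 ((hderiv_le r).trans (le_abs_self _))
  refine ⟨∫ r in Ioi 0, r ^ (n - 1) * (g r ^ 2 + deriv g r ^ 2), fun x hx => ?_⟩
  rw [hug x]
  exact pow_mul_sq_le_integral_Ioi hg (n - 1) hint (norm_pos_iff.2 hx)

theorem tendsto_cocompact_zero_of_norm_mul_sq_le {E : Type*} [NormedAddCommGroup E]
    [ProperSpace E] {u : E → ℝ} {C : ℝ} (hC : ∀ x, x ≠ 0 → ‖x‖ * u x ^ 2 ≤ C) :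
    Tendsto u (cocompact E) (𝓝 0) := by
  have hsq : Tendsto (fun x => u x ^ 2) (cocompact E) (𝓝 0) := by
    refine squeeze_zero' (.of_forall fun x => sq_nonneg _) ?_
      ((tendsto_const_nhds (x := C)).div_atTop tendsto_norm_cocompact_atTop)
    filter_upwards [tendsto_norm_cocompact_atTop.eventually_gt_atTop 0] with x hx
    rw [le_div_iff₀ hx, mul_comm]
    exact hC x (norm_pos_iff.1 hx)
  rw [tendsto_zero_iff_abs_tendsto_zero]
  simpa [Function.comp_def, Real.sqrt_sq_eq_abs] using
    (Real.continuous_sqrt.tendsto 0).comp hsq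

theorem eventually_abs_le_mul_rpow_of_tendsto {F : ℝ → ℝ} {κ L c : ℝ} (hF : ContinuousAt F 0)
    (hκ : 0 < κ) (hLc : L < c)
    (hlim : Tendsto (fun s => |F s| / |s| ^ κ) (𝓝[≠] 0) (𝓝 L)) :
    ∀ᶠ s in 𝓝 0, |F s| ≤ c * |s| ^ κ := by
  have hne : ∀ᶠ s in 𝓝[≠] 0, |F s| ≤ c * |s| ^ κ := by
    filter_upwards [hlim.eventually (eventually_lt_nhds hLc), self_mem_nhdsWithin]
      with s hs hs0
    rw [div_lt_iff₀ (Real.rpow_pos_of_pos (abs_pos.2 hs0) κ)] at hs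
    exact hs.le
  have hrpow : Tendsto (fun s : ℝ => c * |s| ^ κ) (𝓝[≠] 0) (𝓝 0) := by
    have : ContinuousAt (fun s : ℝ => c * |s| ^ κ) 0 := by fun_prop (disch := positivity)
    simpa [Real.zero_rpow hκ.ne'] using this.tendsto.mono_left nhdsWithin_le_nhds
  have hF0 : F 0 = 0 := abs_nonpos_iff.1 <|
    le_of_tendsto_of_tendsto (hF.abs.tendsto.mono_left nhdsWithin_le_nhds) hrpow hne
  filter_upwards [eventually_nhdsWithin_iff.1 hne] with s hs
  rcases eq_or_ne s 0 with rfl | hs0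
  · simp [hF0, Real.zero_rpow hκ.ne']
  · exact hs hs0

theorem rpow_mul_abs_rpow_le_of_mul_sq_le {r a C b κ : ℝ} (hr : 0 ≤ r) (hC : r * a ^ 2 ≤ C)
    (ha : |a| ≤ 1) (hb : 0 ≤ b) (hbκ : 2 * b + 2 ≤ κ) :
    r ^ b * |a| ^ κ ≤ C ^ b * a ^ 2 := by
  rcases eq_or_ne a 0 with rfl | ha0
  · simp [Real.zero_rpow (by linarith : κ ≠ 0)]
  have hpos : 0 < |a| := abs_pos.2 ha0
  have hsplit : |a| ^ κ = |a| ^ (2 * b) * |a| ^ (κ - 2 * b - 2) * a ^ 2 := by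
    rw [← sq_abs, ← Real.rpow_natCast, ← Real.rpow_add hpos, ← Real.rpow_add hpos]
    congr 1
    push_cast
    ring
  have hmul : r ^ b * |a| ^ (2 * b) = (r * a ^ 2) ^ b := by
    rw [Real.mul_rpow hr (sq_nonneg a), ← sq_abs, ← Real.rpow_natCast, ← Real.rpow_mul hpos.le]
    norm_num
  calc r ^ b * |a| ^ κ = (r * a ^ 2) ^ b * |a| ^ (κ - 2 * b - 2) * a ^ 2 := by
        rw [hsplit, ← hmul]; ring
    _ ≤ C ^ b * 1 * a ^ 2 := by
        have hC0 : 0 ≤ C := (by positivity : 0 ≤ r * a ^ 2).trans hC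
        have hdecay : |a| ^ (κ - 2 * b - 2) ≤ 1 := Real.rpow_le_one hpos.le ha (by linarith)
        gcongr
    _ = C ^ b * a ^ 2 := by ring

theorem stmt_13_general (κ : ℝ) (F : ℝ → ℝ) (hF : Continuous F)
    (h0 : Tendsto (fun s => |F s| / |s| ^ κ) (nhdsWithin 0 {(0 : ℝ)}ᶜ) (nhds 1))
    (b : ℝ) (hb0 : 0 ≤ b) (hb : b ≤ κ / 2 - 1)
    (u : EuclideanSpace ℝ (Fin 2) → ℝ)
    (hrad : ∀ x y, ‖x‖ = ‖y‖ → u x = u y)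
    (hdiff : Differentiable ℝ u)
    (hu2 : MemLp u 2 volume)
    (hgrad : MemLp (fun x => ‖fderiv ℝ u x‖) 2 volume) :
    Integrable (fun x => ‖x‖ ^ b * F (u x)) volume := by
  obtain ⟨C, hC⟩ := exists_norm_pow_mul_sq_le_of_radial volume hrad hdiff hu2 hgrad
  simp only [finrank_euclideanSpace_fin, Nat.add_one_sub_one, pow_one] at hC
  have hu0 : Tendsto u (cocompact _) (𝓝 0) := tendsto_cocompact_zero_of_norm_mul_sq_le hC
  have hFu : ∀ᶠ x in cocompact _, |F (u x)| ≤ 2 * |u x| ^ κ :=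
    hu0.eventually
      (eventually_abs_le_mul_rpow_of_tendsto hF.continuousAt (by linarith) one_lt_two h0)
  have hu1 : ∀ᶠ x in cocompact _, |u x| ≤ 1 :=
    ((tendsto_zero_iff_abs_tendsto_zero u).1 hu0).eventually (eventually_le_nhds zero_lt_one)
  have hbigO : (fun x => ‖x‖ ^ b * F (u x)) =O[cocompact _] (fun x => u x ^ 2) := by
    refine .of_bound (2 * C ^ b) ?_
    filter_upwards [hFu, hu1, tendsto_norm_cocompact_atTop.eventually_gt_atTop 0]
      with x hFx hux hx
    rw [Real.norm_eq_abs, abs_mul, abs_of_nonneg (by positivity),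
      Real.norm_of_nonneg (sq_nonneg _)]
    calc ‖x‖ ^ b * |F (u x)| ≤ ‖x‖ ^ b * (2 * |u x| ^ κ) := by gcongr
      _ = 2 * (‖x‖ ^ b * |u x| ^ κ) := by ring
      _ ≤ 2 * (C ^ b * u x ^ 2) := by
        gcongr 2 * ?_
        exact rpow_mul_abs_rpow_le_of_mul_sq_le hx.le (hC x (norm_pos_iff.1 hx)) hux hb0
          (by linarith : 2 * b + 2 ≤ κ)
      _ = 2 * C ^ b * u x ^ 2 := by ring
  have hcont : Continuous fun x : EuclideanSpace ℝ (Fin 2) => ‖x‖ ^ b * F (u x) :=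
    (continuous_norm.rpow_const fun _ => Or.inr hb0).mul (hF.comp hdiff.continuous)
  exact hcont.locallyIntegrable.integrable_of_isBigO_cocompact hbigO
    (hu2.integrable_sq.integrableAtFilter _)

theorem stmt_13 (κ : ℝ) (hκ : 2 < κ) (F : ℝ → ℝ) (hF : Continuous F)
    (h0 : Tendsto (fun s => |F s| / |s| ^ κ) (nhdsWithin 0 {(0 : ℝ)}ᶜ) (nhds 1))
    (hinf : ∀ α : ℝ, 0 < α →
      Tendsto (fun s => |F s| * Real.exp (-α * s ^ 2)) (cocompact ℝ) (nhds 0))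
    (b : ℝ) (hb0 : 0 ≤ b) (hb : b ≤ κ / 2 - 1)
    (u : EuclideanSpace ℝ (Fin 2) → ℝ)
    (hrad : ∀ x y, ‖x‖ = ‖y‖ → u x = u y)
    (hdiff : Differentiable ℝ u)
    (hu2 : MemLp u 2 volume)
    (hgrad : MemLp (fun x => ‖fderiv ℝ u x‖) 2 volume) :
    Integrable (fun x => ‖x‖ ^ b * F (u x)) volume :=
  stmt_13_general κ F hF h0 b hb0 hb u hrad hdiff hu2 hgrad
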